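/- arXiv:1208.2835 — 2 statements merged into one kernel-verified Lean document; each statement's English description precedes it below -/
import Mathlib

section
/- Fix ℏ > 0 and real constants m₁ ≠ 0, k, t. On the space C^∞(ℝ⁴, ℂ) of smooth functions of the variables (x', y', p'₁, p'₂) define the linear operators: q̂'¹ = x'· + (iℏ/2)∂_{p'₁} − (1/2)(iℏ/2)²(k/m₁)t² ∂_{y'}², q̂'² = y'· + (iℏ/2)∂_{p'₂} − (iℏ/2)²(k²/m₁)t³ p'₂ ∂_{y'}² − (iℏ/2)²(k/m₁)t² ∂_{x'}∂_{y'} − (iℏ/2)² 2kt ∂_{y'}∂_{p'₁} + (1/3)(iℏ/2)³(k²/m₁)t³ ∂_{y'}³, p̂'₁ = p'₁· − (iℏ/2)∂_{x'} − (iℏ/2)² kt ∂_{y'}², p̂'₂ = p'₂· − (iℏ/2)∂_{y'}. Then the canonical commutation relations hold: [q̂'ⁱ, p̂'ⱼ] = iℏ δⁱⱼ as operators on C^∞(ℝ⁴, ℂ), for i, j ∈ {1,2}. -/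
open Complex

/-- The partial derivative operator `∂_i` on functions ℝ⁴ → ℂ, where ℝ⁴ carries the
coordinates `(x', y', p'₁, p'₂)` indexed by `0, 1, 2, 3`. -/
noncomputable def pd (i : Fin 4) (f : (Fin 4 → ℝ) → ℂ) : (Fin 4 → ℝ) → ℂ :=
  fun z => fderiv ℝ f z (Pi.single i 1)

/-- `q̂'¹ = x'· + (iℏ/2)∂_{p'₁} − (1/2)(iℏ/2)²(k/m₁)t² ∂_{y'}²`. -/
noncomputable def q1 (ℏ m₁ k t : ℝ) (f : (Fin 4 → ℝ) → ℂ) : (Fin 4 → ℝ) → ℂ := fun z =>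
  (z 0 : ℂ) * f z + (I * (ℏ : ℂ) / 2) * pd 2 f z
    - (1 / 2 : ℂ) * (I * (ℏ : ℂ) / 2) ^ 2 * ((k / m₁ : ℝ) : ℂ) * ((t : ℝ) : ℂ) ^ 2 *
        pd 1 (pd 1 f) z

/-- `q̂'² = y'· + (iℏ/2)∂_{p'₂} − (iℏ/2)²(k²/m₁)t³ p'₂ ∂_{y'}² − (iℏ/2)²(k/m₁)t² ∂_{x'}∂_{y'}
− (iℏ/2)² 2kt ∂_{y'}∂_{p'₁} + (1/3)(iℏ/2)³(k²/m₁)t³ ∂_{y'}³`. -/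
noncomputable def q2 (ℏ m₁ k t : ℝ) (f : (Fin 4 → ℝ) → ℂ) : (Fin 4 → ℝ) → ℂ := fun z =>
  (z 1 : ℂ) * f z + (I * (ℏ : ℂ) / 2) * pd 3 f z
    - (I * (ℏ : ℂ) / 2) ^ 2 * ((k ^ 2 / m₁ : ℝ) : ℂ) * ((t : ℝ) : ℂ) ^ 3 * (z 3 : ℂ) *
        pd 1 (pd 1 f) z
    - (I * (ℏ : ℂ) / 2) ^ 2 * ((k / m₁ : ℝ) : ℂ) * ((t : ℝ) : ℂ) ^ 2 * pd 0 (pd 1 f) z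
    - (I * (ℏ : ℂ) / 2) ^ 2 * (2 * (k : ℂ) * (t : ℂ)) * pd 1 (pd 2 f) z
    + (1 / 3 : ℂ) * (I * (ℏ : ℂ) / 2) ^ 3 * ((k ^ 2 / m₁ : ℝ) : ℂ) * ((t : ℝ) : ℂ) ^ 3 *
        pd 1 (pd 1 (pd 1 f)) z

/-- `p̂'₁ = p'₁· − (iℏ/2)∂_{x'} − (iℏ/2)² kt ∂_{y'}²`. -/
noncomputable def p1 (ℏ m₁ k t : ℝ) (f : (Fin 4 → ℝ) → ℂ) : (Fin 4 → ℝ) → ℂ := fun z =>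
  (z 2 : ℂ) * f z - (I * (ℏ : ℂ) / 2) * pd 0 f z
    - (I * (ℏ : ℂ) / 2) ^ 2 * ((k : ℂ) * (t : ℂ)) * pd 1 (pd 1 f) z

/-- `p̂'₂ = p'₂· − (iℏ/2)∂_{y'}`. -/
noncomputable def p2 (ℏ m₁ k t : ℝ) (f : (Fin 4 → ℝ) → ℂ) : (Fin 4 → ℝ) → ℂ := fun z =>
  (z 3 : ℂ) * f z - (I * (ℏ : ℂ) / 2) * pd 1 f z


lemma contDiff_pd {f : (Fin 4 → ℝ) → ℂ} (hf : ContDiff ℝ (⊤ : ℕ∞) f) (i : Fin 4) :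
    ContDiff ℝ (⊤ : ℕ∞) (pd i f) := by
  have h : pd i f = fun z => (ContinuousLinearMap.apply ℝ ℂ (Pi.single i 1)) (fderiv ℝ f z) := rfl
  rw [h]
  exact (ContinuousLinearMap.apply ℝ ℂ _).contDiff.comp (hf.fderiv_right (m := (⊤:ℕ∞)) (le_of_eq (by norm_cast)))

lemma contDiff_coord (a : Fin 4) : ContDiff ℝ (⊤ : ℕ∞) (fun z : Fin 4 → ℝ => (z a : ℂ)) :=
  Complex.ofRealCLM.contDiff.comp (contDiff_apply ℝ ℝ a)

lemma diffAt_of_smooth {g : (Fin 4 → ℝ) → ℂ} (hg : ContDiff ℝ (⊤:ℕ∞) g) (z : Fin 4 → ℝ) :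
    DifferentiableAt ℝ g z := (hg.differentiable (by simp)).differentiableAt

lemma pd_add {g h : (Fin 4 → ℝ) → ℂ} (hg : ContDiff ℝ (⊤:ℕ∞) g) (hh : ContDiff ℝ (⊤:ℕ∞) h)
    (i : Fin 4) (z : Fin 4 → ℝ) :
    pd i (fun w => g w + h w) z = pd i g z + pd i h z := by
  unfold pd
  rw [fderiv_fun_add (diffAt_of_smooth hg z) (diffAt_of_smooth hh z)]
  rfl

lemma pd_smul {g : (Fin 4 → ℝ) → ℂ} (hg : ContDiff ℝ (⊤:ℕ∞) g) (c : ℂ)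
    (i : Fin 4) (z : Fin 4 → ℝ) :
    pd i (fun w => c • g w) z = c • pd i g z := by
  unfold pd
  rw [fderiv_fun_const_smul (diffAt_of_smooth hg z)]
  rfl

lemma coord_hasFDeriv (a : Fin 4) (z : Fin 4 → ℝ) :
    HasFDerivAt (fun w : Fin 4 → ℝ => (w a : ℂ))
      (Complex.ofRealCLM.comp (ContinuousLinearMap.proj a)) z :=
 by
  have := (Complex.ofRealCLM.comp
    (ContinuousLinearMap.proj (R := ℝ) (φ := fun _ : Fin 4 => ℝ) a)).hasFDerivAt (x := z)
  exact this

lemma pd_coord_mul {g : (Fin 4 → ℝ) → ℂ} (hg : ContDiff ℝ (⊤:ℕ∞) g) (i a : Fin 4)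
    (z : Fin 4 → ℝ) :
    pd i (fun w => (w a : ℂ) * g w) z
      = (if i = a then (1:ℂ) else 0) * g z + (z a : ℂ) * pd i g z := by
  unfold pd
  rw [fderiv_fun_mul (diffAt_of_smooth (contDiff_coord a) z) (diffAt_of_smooth hg z)]
  rw [(coord_hasFDeriv a z).fderiv]
  simp only [ContinuousLinearMap.add_apply, ContinuousLinearMap.coe_smul', Pi.smul_apply,
    ContinuousLinearMap.coe_comp', Function.comp_apply, ContinuousLinearMap.proj_apply,
    Complex.ofRealCLM_apply, smul_eq_mul]
  rw [Pi.single_apply]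
  by_cases h : i = a
  · subst h; simp; ring
  · simp [h, Ne.symm h]
  
lemma pd_comm {f : (Fin 4 → ℝ) → ℂ} (hf : ContDiff ℝ (⊤:ℕ∞) f) (i j : Fin 4) :
    pd i (pd j f) = pd j (pd i f) := by
  funext z
  have h2 : ∀ (a : Fin 4) (w : Fin 4 → ℝ),
      pd a f = fun y => (ContinuousLinearMap.apply ℝ ℂ (Pi.single a 1)) (fderiv ℝ f y) :=
    fun _ _ => rfl
  have hdf : DifferentiableAt ℝ (fderiv ℝ f) z :=
    ((hf.fderiv_right (m := (⊤:ℕ∞)) (le_of_eq (by norm_cast))).differentiable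
      (by simp)).differentiableAt
  have key : ∀ a b : Fin 4,
      pd a (pd b f) z = fderiv ℝ (fderiv ℝ f) z (Pi.single a 1) (Pi.single b 1) := by
    intro a b
    show fderiv ℝ (pd b f) z (Pi.single a 1) = _
    rw [h2 b z]
    have hc : (fun y => (ContinuousLinearMap.apply ℝ ℂ (Pi.single b 1)) (fderiv ℝ f y))
        = (⇑(ContinuousLinearMap.apply ℝ ℂ (Pi.single b 1)) ∘ fderiv ℝ f) := rfl
    rw [hc, ((ContinuousLinearMap.apply ℝ ℂ (Pi.single b 1)).hasFDerivAt.comp z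
      hdf.hasFDerivAt).fderiv]
    rfl
  rw [key i j, key j i]
  exact (hf.contDiffAt.isSymmSndFDerivAt (by
    rw [minSmoothness_of_isRCLikeNormedField]
    exact WithTop.coe_le_coe.mpr le_top)) _ _

/-- The submodule of smooth functions. -/
noncomputable def Sm : Submodule ℂ ((Fin 4 → ℝ) → ℂ) where
  carrier := {f | ContDiff ℝ (⊤:ℕ∞) f}
  add_mem' := by
    intro f g hf hg
    simp only [Set.mem_setOf_eq] at *
    exact hf.add hg
  zero_mem' := by
    show ContDiff ℝ (⊤:ℕ∞) (fun _ => (0:ℂ))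
    exact contDiff_const
  smul_mem' := by
    intro c f hf
    simp only [Set.mem_setOf_eq] at *
    show ContDiff ℝ (⊤:ℕ∞) (fun z => c * f z)
    exact contDiff_const.mul hf

noncomputable def Dop (i : Fin 4) : Sm →ₗ[ℂ] Sm where
  toFun g := ⟨pd i g.1, contDiff_pd g.2 i⟩
  map_add' g h := Subtype.ext (funext fun z => pd_add g.2 h.2 i z)
  map_smul' c g := Subtype.ext (funext fun z => pd_smul g.2 c i z)

noncomputable def Xop (a : Fin 4) : Sm →ₗ[ℂ] Sm where
  toFun g := ⟨fun z => (z a : ℂ) * g.1 z, (contDiff_coord a).mul g.2⟩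
  map_add' g h := Subtype.ext (funext fun z => by simp [mul_add])
  map_smul' c g := Subtype.ext (funext fun z => by simp; ring)

lemma DX (i a : Fin 4) : Dop i * Xop a = Xop a * Dop i + (if i = a then (1:ℂ) else 0) • 1 := by
  apply LinearMap.ext; intro g
  apply Subtype.ext; funext z
  show pd i (fun w => (w a : ℂ) * g.1 w) z = _
  rw [pd_coord_mul g.2 i a z]
  by_cases h : i = a <;> simp [h, Dop, Xop, add_comm]

lemma DD (i j : Fin 4) : Dop i * Dop j = Dop j * Dop i := by
  apply LinearMap.ext; intro g
  apply Subtype.ext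
  show pd i (pd j g.1) = pd j (pd i g.1)
  exact pd_comm g.2 i j

lemma XX (a b : Fin 4) : Xop a * Xop b = Xop b * Xop a := by
  apply LinearMap.ext; intro g
  apply Subtype.ext; funext z
  show (z a : ℂ) * ((z b : ℂ) * g.1 z) = (z b : ℂ) * ((z a : ℂ) * g.1 z)
  ring


section AbstractCCR
variable {R : Type*} [Ring R] [Module ℂ R] [IsScalarTower ℂ R R] [SMulCommClass ℂ R R]

lemma abstract_ccr (x d : Fin 4 → R) (α c1 β γ δ' ε μ : ℂ)
    (hdx : ∀ i a, d i * x a = x a * d i + (if i = a then (1:ℂ) else 0) • 1)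
    (hdd : ∀ i j, d i * d j = d j * d i)
    (hxx : ∀ a b, x a * x b = x b * x a)
    (hδ : δ' = 2 * μ) :
    ((x 0 + α • d 2 - c1 • (d 1 * d 1)) * (x 2 - α • d 0 - μ • (d 1 * d 1))
      - (x 2 - α • d 0 - μ • (d 1 * d 1)) * (x 0 + α • d 2 - c1 • (d 1 * d 1))
      = (2 * α) • 1) ∧
    ((x 0 + α • d 2 - c1 • (d 1 * d 1)) * (x 3 - α • d 1)
      - (x 3 - α • d 1) * (x 0 + α • d 2 - c1 • (d 1 * d 1)) = 0) ∧
    ((x 1 + α • d 3 - β • (x 3 * (d 1 * d 1)) - γ • (d 0 * d 1) - δ' • (d 1 * d 2)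
        + ε • (d 1 * (d 1 * d 1))) * (x 2 - α • d 0 - μ • (d 1 * d 1))
      - (x 2 - α • d 0 - μ • (d 1 * d 1)) * (x 1 + α • d 3 - β • (x 3 * (d 1 * d 1))
        - γ • (d 0 * d 1) - δ' • (d 1 * d 2) + ε • (d 1 * (d 1 * d 1))) = 0) ∧
    ((x 1 + α • d 3 - β • (x 3 * (d 1 * d 1)) - γ • (d 0 * d 1) - δ' • (d 1 * d 2)
        + ε • (d 1 * (d 1 * d 1))) * (x 3 - α • d 1)
      - (x 3 - α • d 1) * (x 1 + α • d 3 - β • (x 3 * (d 1 * d 1))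
        - γ • (d 0 * d 1) - δ' • (d 1 * d 2) + ε • (d 1 * (d 1 * d 1)))
      = (2 * α) • 1) := by
  subst hδ
  have hdx1 : ∀ i, d i * x i = x i * d i + 1 := fun i => by simpa using hdx i i
  have hdx0 : ∀ i a, i ≠ a → d i * x a = x a * d i := fun i a h => by
    simpa [h] using hdx i a
  have hdx1w : ∀ i (w : R), d i * (x i * w) = x i * (d i * w) + w := fun i w => by
    rw [← mul_assoc, hdx1, add_mul, one_mul, mul_assoc]
  have hdx0w : ∀ i a, i ≠ a → ∀ w : R, d i * (x a * w) = x a * (d i * w) := fun i a h w => by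
    rw [← mul_assoc, hdx0 i a h, mul_assoc]
  have hddo : ∀ i j, j < i → d i * d j = d j * d i := fun i j _ => hdd i j
  have hddow : ∀ i j, j < i → ∀ w : R, d i * (d j * w) = d j * (d i * w) := fun i j h w => by
    rw [← mul_assoc, hdd i j, mul_assoc]
  have hxxo : ∀ a b, b < a → x a * x b = x b * x a := fun a b _ => hxx a b
  have hxxow : ∀ a b, b < a → ∀ w : R, x a * (x b * w) = x b * (x a * w) := fun a b h w => by
    rw [← mul_assoc, hxx a b, mul_assoc]
  refine ⟨?_, ?_, ?_, ?_⟩ <;>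
  · simp only [mul_add, add_mul, mul_sub, sub_mul, smul_mul_assoc, mul_smul_comm, smul_smul,
      mul_assoc, hdx1, hdx1w, hdx0, hdx0w, hddo, hddow, hxxo, hxxow,
      mul_one, one_mul, smul_add, smul_sub, one_smul, zero_smul, smul_zero, add_zero, zero_add,
      ne_eq, Fin.reduceEq, Fin.reduceLT, not_false_eq_true, decide_eq_true_eq]
    module

end AbstractCCR

section Ops
variable (ℏ m₁ k t : ℝ)

noncomputable def Q1op (ℏ m₁ k t : ℝ) : Module.End ℂ Sm :=
  Xop 0 + (I * (ℏ : ℂ) / 2) • Dop 2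
    - ((1 / 2 : ℂ) * (I * (ℏ : ℂ) / 2) ^ 2 * ((k / m₁ : ℝ) : ℂ) * ((t : ℝ) : ℂ) ^ 2) •
        (Dop 1 * Dop 1)

noncomputable def Q2op (ℏ m₁ k t : ℝ) : Module.End ℂ Sm :=
  Xop 1 + (I * (ℏ : ℂ) / 2) • Dop 3
    - ((I * (ℏ : ℂ) / 2) ^ 2 * ((k ^ 2 / m₁ : ℝ) : ℂ) * ((t : ℝ) : ℂ) ^ 3) •
        (Xop 3 * (Dop 1 * Dop 1))
    - ((I * (ℏ : ℂ) / 2) ^ 2 * ((k / m₁ : ℝ) : ℂ) * ((t : ℝ) : ℂ) ^ 2) • (Dop 0 * Dop 1)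
    - ((I * (ℏ : ℂ) / 2) ^ 2 * (2 * (k : ℂ) * (t : ℂ))) • (Dop 1 * Dop 2)
    + ((1 / 3 : ℂ) * (I * (ℏ : ℂ) / 2) ^ 3 * ((k ^ 2 / m₁ : ℝ) : ℂ) * ((t : ℝ) : ℂ) ^ 3) •
        (Dop 1 * (Dop 1 * Dop 1))

noncomputable def P1op (ℏ m₁ k t : ℝ) : Module.End ℂ Sm :=
  Xop 2 - (I * (ℏ : ℂ) / 2) • Dop 0
    - ((I * (ℏ : ℂ) / 2) ^ 2 * ((k : ℂ) * (t : ℂ))) • (Dop 1 * Dop 1)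

noncomputable def P2op (ℏ m₁ k t : ℝ) : Module.End ℂ Sm :=
  Xop 3 - (I * (ℏ : ℂ) / 2) • Dop 1

lemma q1op_apply (g : Sm) (z : Fin 4 → ℝ) :
    ((Q1op ℏ m₁ k t g : Sm) : (Fin 4 → ℝ) → ℂ) z = q1 ℏ m₁ k t g.1 z := by
  simp only [Q1op, q1, LinearMap.sub_apply, LinearMap.add_apply, LinearMap.smul_apply,
    Module.End.mul_apply, Dop, Xop, LinearMap.coe_mk, AddHom.coe_mk, AddSubgroupClass.coe_sub,
    Submodule.coe_add, Submodule.coe_smul, Pi.add_apply, Pi.sub_apply, Pi.smul_apply,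
    smul_eq_mul]
  try ring

lemma q2op_apply (g : Sm) (z : Fin 4 → ℝ) :
    ((Q2op ℏ m₁ k t g : Sm) : (Fin 4 → ℝ) → ℂ) z = q2 ℏ m₁ k t g.1 z := by
  simp only [Q2op, q2, LinearMap.sub_apply, LinearMap.add_apply, LinearMap.smul_apply,
    Module.End.mul_apply, Dop, Xop, LinearMap.coe_mk, AddHom.coe_mk, AddSubgroupClass.coe_sub,
    Submodule.coe_add, Submodule.coe_smul, Pi.add_apply, Pi.sub_apply, Pi.smul_apply,
    smul_eq_mul]
  ring

lemma p1op_apply (g : Sm) (z : Fin 4 → ℝ) :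
    ((P1op ℏ m₁ k t g : Sm) : (Fin 4 → ℝ) → ℂ) z = p1 ℏ m₁ k t g.1 z := by
  simp only [P1op, p1, LinearMap.sub_apply, LinearMap.add_apply, LinearMap.smul_apply,
    Module.End.mul_apply, Dop, Xop, LinearMap.coe_mk, AddHom.coe_mk, AddSubgroupClass.coe_sub,
    Submodule.coe_add, Submodule.coe_smul, Pi.add_apply, Pi.sub_apply, Pi.smul_apply,
    smul_eq_mul]
  try ring

lemma p2op_apply (g : Sm) (z : Fin 4 → ℝ) :
    ((P2op ℏ m₁ k t g : Sm) : (Fin 4 → ℝ) → ℂ) z = p2 ℏ m₁ k t g.1 z := by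
  simp only [P2op, p2, LinearMap.sub_apply, LinearMap.add_apply, LinearMap.smul_apply,
    Module.End.mul_apply, Dop, Xop, LinearMap.coe_mk, AddHom.coe_mk, AddSubgroupClass.coe_sub,
    Submodule.coe_add, Submodule.coe_smul, Pi.add_apply, Pi.sub_apply, Pi.smul_apply,
    smul_eq_mul]
  try ring

lemma end_ccr (g : Sm) (z : Fin 4 → ℝ) :
    (((Q1op ℏ m₁ k t (P1op ℏ m₁ k t g) : Sm) : (Fin 4 → ℝ) → ℂ) z
        - ((P1op ℏ m₁ k t (Q1op ℏ m₁ k t g) : Sm) : (Fin 4 → ℝ) → ℂ) z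
        = (2 * (I * (ℏ:ℂ) / 2)) * g.1 z) ∧
    (((Q1op ℏ m₁ k t (P2op ℏ m₁ k t g) : Sm) : (Fin 4 → ℝ) → ℂ) z
        - ((P2op ℏ m₁ k t (Q1op ℏ m₁ k t g) : Sm) : (Fin 4 → ℝ) → ℂ) z = 0) ∧
    (((Q2op ℏ m₁ k t (P1op ℏ m₁ k t g) : Sm) : (Fin 4 → ℝ) → ℂ) z
        - ((P1op ℏ m₁ k t (Q2op ℏ m₁ k t g) : Sm) : (Fin 4 → ℝ) → ℂ) z = 0) ∧
    (((Q2op ℏ m₁ k t (P2op ℏ m₁ k t g) : Sm) : (Fin 4 → ℝ) → ℂ) z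
        - ((P2op ℏ m₁ k t (Q2op ℏ m₁ k t g) : Sm) : (Fin 4 → ℝ) → ℂ) z
        = (2 * (I * (ℏ:ℂ) / 2)) * g.1 z) := by
  obtain ⟨h1, h2, h3, h4⟩ := abstract_ccr (R := Module.End ℂ Sm) Xop Dop
    (I * (ℏ : ℂ) / 2)
    ((1 / 2 : ℂ) * (I * (ℏ : ℂ) / 2) ^ 2 * ((k / m₁ : ℝ) : ℂ) * ((t : ℝ) : ℂ) ^ 2)
    ((I * (ℏ : ℂ) / 2) ^ 2 * ((k ^ 2 / m₁ : ℝ) : ℂ) * ((t : ℝ) : ℂ) ^ 3)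
    ((I * (ℏ : ℂ) / 2) ^ 2 * ((k / m₁ : ℝ) : ℂ) * ((t : ℝ) : ℂ) ^ 2)
    ((I * (ℏ : ℂ) / 2) ^ 2 * (2 * (k : ℂ) * (t : ℂ)))
    ((1 / 3 : ℂ) * (I * (ℏ : ℂ) / 2) ^ 3 * ((k ^ 2 / m₁ : ℝ) : ℂ) * ((t : ℝ) : ℂ) ^ 3)
    ((I * (ℏ : ℂ) / 2) ^ 2 * ((k : ℂ) * (t : ℂ)))
    DX DD XX (by ring)
  exact ⟨congrArg (fun T : Module.End ℂ Sm => ((T g : Sm) : (Fin 4 → ℝ) → ℂ) z) h1,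
    congrArg (fun T : Module.End ℂ Sm => ((T g : Sm) : (Fin 4 → ℝ) → ℂ) z) h2,
    congrArg (fun T : Module.End ℂ Sm => ((T g : Sm) : (Fin 4 → ℝ) → ℂ) z) h3,
    congrArg (fun T : Module.End ℂ Sm => ((T g : Sm) : (Fin 4 → ℝ) → ℂ) z) h4⟩

end Ops


/-- For ℏ > 0 and real constants m₁ ≠ 0, k, t, the operators `q̂'¹, q̂'², p̂'₁, p̂'₂`
satisfy the canonical commutation relations `[q̂'ⁱ, p̂'ⱼ] = iℏ δⁱⱼ` on C^∞(ℝ⁴, ℂ). -/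
theorem transformed_ccr (ℏ m₁ k t : ℝ) (hℏ : 0 < ℏ) (hm₁ : m₁ ≠ 0)
    (f : (Fin 4 → ℝ) → ℂ) (hf : ContDiff ℝ (⊤ : ℕ∞) f) :
    (∀ z, q1 ℏ m₁ k t (p1 ℏ m₁ k t f) z - p1 ℏ m₁ k t (q1 ℏ m₁ k t f) z
        = I * (ℏ : ℂ) * f z) ∧
    (∀ z, q1 ℏ m₁ k t (p2 ℏ m₁ k t f) z - p2 ℏ m₁ k t (q1 ℏ m₁ k t f) z = 0) ∧
    (∀ z, q2 ℏ m₁ k t (p1 ℏ m₁ k t f) z - p1 ℏ m₁ k t (q2 ℏ m₁ k t f) z = 0) ∧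
    (∀ z, q2 ℏ m₁ k t (p2 ℏ m₁ k t f) z - p2 ℏ m₁ k t (q2 ℏ m₁ k t f) z
        = I * (ℏ : ℂ) * f z) := by
  have hf' : ContDiff ℝ (⊤:ℕ∞) f := hf.of_le (by simp)
  set g : Sm := ⟨f, hf'⟩ with hg
  have hfg : f = (g : (Fin 4 → ℝ) → ℂ) := rfl
  have hq1 : q1 ℏ m₁ k t (g : (Fin 4 → ℝ) → ℂ)
      = ((Q1op ℏ m₁ k t g : Sm) : (Fin 4 → ℝ) → ℂ) :=
    funext fun z => (q1op_apply ℏ m₁ k t g z).symm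
  have hq2 : q2 ℏ m₁ k t (g : (Fin 4 → ℝ) → ℂ)
      = ((Q2op ℏ m₁ k t g : Sm) : (Fin 4 → ℝ) → ℂ) :=
    funext fun z => (q2op_apply ℏ m₁ k t g z).symm
  have hp1 : p1 ℏ m₁ k t (g : (Fin 4 → ℝ) → ℂ)
      = ((P1op ℏ m₁ k t g : Sm) : (Fin 4 → ℝ) → ℂ) :=
    funext fun z => (p1op_apply ℏ m₁ k t g z).symm
  have hp2 : p2 ℏ m₁ k t (g : (Fin 4 → ℝ) → ℂ)
      = ((P2op ℏ m₁ k t g : Sm) : (Fin 4 → ℝ) → ℂ) :=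
    funext fun z => (p2op_apply ℏ m₁ k t g z).symm
  refine ⟨fun z => ?_, fun z => ?_, fun z => ?_, fun z => ?_⟩
  · obtain ⟨h, -, -, -⟩ := end_ccr ℏ m₁ k t g z
    rw [hfg, hp1, q1op_apply ℏ m₁ k t (P1op ℏ m₁ k t g) z |>.symm,
      hq1, p1op_apply ℏ m₁ k t (Q1op ℏ m₁ k t g) z |>.symm, h]
    ring
  · obtain ⟨-, h, -, -⟩ := end_ccr ℏ m₁ k t g z
    rw [hfg, hp2, q1op_apply ℏ m₁ k t (P2op ℏ m₁ k t g) z |>.symm,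
      hq1, p2op_apply ℏ m₁ k t (Q1op ℏ m₁ k t g) z |>.symm, h]
  · obtain ⟨-, -, h, -⟩ := end_ccr ℏ m₁ k t g z
    rw [hfg, hp1, q2op_apply ℏ m₁ k t (P1op ℏ m₁ k t g) z |>.symm,
      hq2, p1op_apply ℏ m₁ k t (Q2op ℏ m₁ k t g) z |>.symm, h]
  · obtain ⟨-, -, -, h⟩ := end_ccr ℏ m₁ k t g z
    rw [hfg, hp2, q2op_apply ℏ m₁ k t (P2op ℏ m₁ k t g) z |>.symm,
      hq2, p2op_apply ℏ m₁ k t (Q2op ℏ m₁ k t g) z |>.symm, h]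
    ring
end

section
/- Fix real constants m₁ ≠ 0, m₂ ≠ 0, k, t. The map T : ℝ⁴ → ℝ⁴ given by T(x', y', p'₁, p'₂) = (x, y, p₁, p₂) with x = x' − (t/m₁)p'₁ − (k/(2m₁))t² p'₂², y = y' − (t/m₂)p'₂ − 2kt x' p'₂ + (k/m₁)t² p'₁ p'₂ + (k²/(3m₁))t³ p'₂³, p₁ = p'₁ + kt p'₂², p₂ = p'₂, is a classical canonical transformation: at every point its Jacobian matrix DT satisfies (DT)^T Ω (DT) = Ω, where Ω is the standard symplectic matrix for the form dx ∧ dp₁ + dy ∧ dp₂. -/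
open Matrix

/-- The Jacobian matrix of a map `T : ℝ⁴ → ℝ⁴` at a point `z`:
`(DT(z))_{ij} = ∂T^i/∂z^j (z)`. -/
noncomputable def jac4 (T : (Fin 4 → ℝ) → (Fin 4 → ℝ)) (z : Fin 4 → ℝ) :
    Matrix (Fin 4) (Fin 4) ℝ :=
  fun i j => fderiv ℝ T z (Pi.single j 1) i

/-- The standard symplectic matrix for the form `dx ∧ dp₁ + dy ∧ dp₂` in the
coordinate ordering `(x, y, p₁, p₂)`: `Ω = [[0, I₂], [−I₂, 0]]`. -/
def Omega4 : Matrix (Fin 4) (Fin 4) ℝ :=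
  !![0, 0, 1, 0; 0, 0, 0, 1; -1, 0, 0, 0; 0, -1, 0, 0]

/-!
In the blocks `(x, y | p₁, p₂)` the Jacobian of `T` is `[[A, B], [0, D]]` with `Aᵀ D = I`, so
the symplectic condition reduces to the symmetry of `Bᵀ D`. That symmetry holds because the
coefficient `(k/m₁) t²` of the cross terms of `T` is the product of `k t` and `t/m₁`.
-/

theorem jac4_eq_toMatrix' (T : (Fin 4 → ℝ) → (Fin 4 → ℝ)) (z : Fin 4 → ℝ) :
    jac4 T z = LinearMap.toMatrix' (fderiv ℝ T z : (Fin 4 → ℝ) →ₗ[ℝ] Fin 4 → ℝ) :=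
  rfl

theorem HasFDerivAt.jac4_eq {T : (Fin 4 → ℝ) → (Fin 4 → ℝ)} {z : Fin 4 → ℝ}
    {M : Matrix (Fin 4) (Fin 4) ℝ}
    (h : HasFDerivAt T (LinearMap.toContinuousLinearMap (toLin' M)) z) :
    jac4 T z = M := by
  rw [jac4_eq_toMatrix', h.fderiv, LinearMap.coe_toContinuousLinearMap,
    LinearMap.toMatrix'_toLin']

section TwoParticleFlow

variable (m₁ m₂ k t : ℝ)

noncomputable def twoParticleFlow (z : Fin 4 → ℝ) : Fin 4 → ℝ :=
  ![z 0 - (t / m₁) * z 2 - (k / (2 * m₁)) * t ^ 2 * (z 3) ^ 2,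
    z 1 - (t / m₂) * z 3 - 2 * k * t * z 0 * z 3 + (k / m₁) * t ^ 2 * z 2 * z 3
      + (k ^ 2 / (3 * m₁)) * t ^ 3 * (z 3) ^ 3,
    z 2 + k * t * (z 3) ^ 2,
    z 3]

noncomputable def twoParticleFlowJacobian (z : Fin 4 → ℝ) : Matrix (Fin 4) (Fin 4) ℝ :=
  !![1, 0, -(t / m₁), -(k / m₁) * t ^ 2 * z 3;
     -2 * k * t * z 3, 1, (k / m₁) * t ^ 2 * z 3,
       -(t / m₂) - 2 * k * t * z 0 + (k / m₁) * t ^ 2 * z 2 + (k ^ 2 / m₁) * t ^ 3 * z 3 ^ 2;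
     0, 0, 1, 2 * k * t * z 3;
     0, 0, 0, 1]

theorem hasFDerivAt_twoParticleFlow (z : Fin 4 → ℝ) :
    HasFDerivAt (twoParticleFlow m₁ m₂ k t)
      (LinearMap.toContinuousLinearMap (toLin' (twoParticleFlowJacobian m₁ m₂ k t z))) z := by
  have hc (i : Fin 4) :
      HasFDerivAt (fun w : Fin 4 → ℝ => w i) (ContinuousLinearMap.proj (R := ℝ) i) z :=
    hasFDerivAt_apply i z
  refine hasFDerivAt_pi'.2 fun i => ?_
  fin_cases i
  · refine (((hc 0).sub ((hc 2).const_mul (t / m₁))).sub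
      (((hc 3).pow 2).const_mul ((k / (2 * m₁)) * t ^ 2))).congr_fderiv ?_
    ext v
    simp [twoParticleFlowJacobian, dotProduct, Fin.sum_univ_four]
    ring
  · refine (((((hc 1).sub ((hc 3).const_mul (t / m₂))).sub
      (((hc 0).const_mul (2 * k * t)).mul (hc 3))).add
      (((hc 2).const_mul ((k / m₁) * t ^ 2)).mul (hc 3))).add
      (((hc 3).pow 3).const_mul ((k ^ 2 / (3 * m₁)) * t ^ 3))).congr_fderiv ?_
    ext v
    simp [twoParticleFlowJacobian, dotProduct, Fin.sum_univ_four]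
    ring
  · refine ((hc 2).add (((hc 3).pow 2).const_mul (k * t))).congr_fderiv ?_
    ext v
    simp [twoParticleFlowJacobian, dotProduct, Fin.sum_univ_four]
    ring
  · exact (hc 3).congr_fderiv
      (by ext v; simp [twoParticleFlowJacobian, dotProduct, Fin.sum_univ_four])

theorem twoParticleFlowJacobian_transpose_mul_Omega4_mul_self (z : Fin 4 → ℝ) :
    (twoParticleFlowJacobian m₁ m₂ k t z)ᵀ * Omega4 * twoParticleFlowJacobian m₁ m₂ k t z =
      Omega4 := by
  ext i j
  fin_cases i <;> fin_cases j <;>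
    simp [twoParticleFlowJacobian, Omega4, mul_apply, Fin.sum_univ_four] <;> ring

end TwoParticleFlow

theorem two_particle_flow_is_canonical_general (m₁ m₂ k t : ℝ)
    (T : (Fin 4 → ℝ) → (Fin 4 → ℝ))
    (hT : ∀ z : Fin 4 → ℝ, T z =
      ![z 0 - (t / m₁) * z 2 - (k / (2 * m₁)) * t ^ 2 * (z 3) ^ 2,
        z 1 - (t / m₂) * z 3 - 2 * k * t * z 0 * z 3 + (k / m₁) * t ^ 2 * z 2 * z 3
          + (k ^ 2 / (3 * m₁)) * t ^ 3 * (z 3) ^ 3,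
        z 2 + k * t * (z 3) ^ 2,
        z 3]) :
    ∀ z : Fin 4 → ℝ, (jac4 T z)ᵀ * Omega4 * jac4 T z = Omega4 := by
  obtain rfl : T = twoParticleFlow m₁ m₂ k t := funext hT
  intro z
  rw [(hasFDerivAt_twoParticleFlow m₁ m₂ k t z).jac4_eq]
  exact twoParticleFlowJacobian_transpose_mul_Omega4_mul_self m₁ m₂ k t z

/-- Fix real constants m₁ ≠ 0, m₂ ≠ 0, k, t.  The map `T(x',y',p'₁,p'₂) = (x,y,p₁,p₂)`
with `x = x' − (t/m₁)p'₁ − (k/(2m₁))t² p'₂²`,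
`y = y' − (t/m₂)p'₂ − 2kt x' p'₂ + (k/m₁)t² p'₁ p'₂ + (k²/(3m₁))t³ p'₂³`,
`p₁ = p'₁ + kt p'₂²`, `p₂ = p'₂`
is a classical canonical transformation: `(DT)ᵀ Ω (DT) = Ω` at every point. -/
theorem two_particle_flow_is_canonical (m₁ m₂ k t : ℝ) (hm₁ : m₁ ≠ 0) (hm₂ : m₂ ≠ 0)
    (T : (Fin 4 → ℝ) → (Fin 4 → ℝ))
    (hT : ∀ z : Fin 4 → ℝ, T z =
      ![z 0 - (t / m₁) * z 2 - (k / (2 * m₁)) * t ^ 2 * (z 3) ^ 2,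
        z 1 - (t / m₂) * z 3 - 2 * k * t * z 0 * z 3 + (k / m₁) * t ^ 2 * z 2 * z 3
          + (k ^ 2 / (3 * m₁)) * t ^ 3 * (z 3) ^ 3,
        z 2 + k * t * (z 3) ^ 2,
        z 3]) :
    ∀ z : Fin 4 → ℝ, (jac4 T z)ᵀ * Omega4 * jac4 T z = Omega4 :=
  two_particle_flow_is_canonical_general m₁ m₂ k t T hT
end
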